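/- (Leading logarithmic term of I_2 at the figure-eight.) As h → 0⁺ one has (I_2(h) − 16/15 − 4h) / (h²·ln h) → 1/2. -/

import Mathlib

open Real Set Filter intervalIntegral

/-- Right endpoint of the exterior oval: `x_max(h) = √(1 + √(1+4h))`. -/
noncomputable def xmax (h : ℝ) : ℝ := Real.sqrt (1 + Real.sqrt (1 + 4*h))

/-- Complete elliptic integral `I_i(h) = ∫_{-x_max}^{x_max} x^i √(2h + x² - x⁴/2) dx`. -/
noncomputable def ellI (i : ℕ) (h : ℝ) : ℝ :=
  ∫ x in (-xmax h)..(xmax h), x^i * Real.sqrt (2*h + x^2 - x^4/2)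

/-- Complete elliptic integral `I'_i(h) = ∫_{-x_max}^{x_max} x^i (2h + x² - x⁴/2)^{-1/2} dx`. -/
noncomputable def ellI' (i : ℕ) (h : ℝ) : ℝ :=
  ∫ x in (-xmax h)..(xmax h), x^i / Real.sqrt (2*h + x^2 - x^4/2)

open Topology

/-!
Substituting `t = x²` gives `√2 · I₂(h) = ∫₀^A √(A - t) √(t (t + B)) dt` with `A = x_max(h)²`
and `B = A - 2 ~ 2h`, because `2h + t - t²/2 = (A - t)(t + B)/2`. Since
`(t + B/2)² - t (t + B) = B²/4`, the factor `√(t (t + B))` equals `t + B/2` minus `B²/4` divided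
by a quantity between `2t + B/2` and `2t + B`. The polynomial part integrates to
`16/15 + 4h + O(h³)`. In the remainder, replacing `√(A - t)` by `√A` costs only `O(h²)`, and
`∫₀^A dt / (2t + c) = log((2A + c)/c)/2` with `c ≍ h` makes it `(h²/2) log h + O(h²)`.
-/

lemma integral_inv_two_mul_add {A c : ℝ} (hA : 0 ≤ A) (hc : 0 < c) :
    ∫ t in (0:ℝ)..A, (2 * t + c)⁻¹ = log ((2 * A + c) / c) / 2 := by
  rw [integral_comp_mul_add (f := fun x => x⁻¹) two_ne_zero, mul_zero, zero_add,
    integral_inv_of_pos hc (by linarith), smul_eq_mul]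
  ring

lemma integral_sq_mul_comp_sq {g : ℝ → ℝ} (hg : Continuous g) {w : ℝ} (hw : 0 ≤ w) :
    ∫ x in -w..w, x ^ 2 * g (x ^ 2) = ∫ t in (0:ℝ)..w ^ 2, √t * g t := by
  have hint : ∀ a b : ℝ, IntervalIntegrable (fun x => x ^ 2 * g (x ^ 2)) MeasureTheory.volume a b :=
    fun a b => by apply Continuous.intervalIntegrable; fun_prop
  have heven : ∫ x in -w..0, x ^ 2 * g (x ^ 2) = ∫ x in (0:ℝ)..w, x ^ 2 * g (x ^ 2) := by
    have := integral_comp_neg (a := 0) (b := w) (fun x => x ^ 2 * g (x ^ 2))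
    simp only [neg_sq, neg_zero] at this
    exact this.symm
  have hsubst : ∫ x in (0:ℝ)..w, (fun t => √t * g t) (x ^ 2) * (2 * x)
      = ∫ t in (0:ℝ)..w ^ 2, √t * g t := by
    have := integral_comp_mul_deriv (a := 0) (b := w) (f := fun x => x ^ 2) (f' := fun x => 2 * x)
      (fun x _ => by simpa using hasDerivAt_pow 2 x) (by fun_prop) (continuous_sqrt.mul hg)
    rw [zero_pow two_ne_zero] at this
    exact this
  rw [← integral_add_adjacent_intervals (hint _ 0) (hint 0 _), heven, ← hsubst, ← two_mul,
    ← integral_const_mul]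
  refine integral_congr fun x hx => ?_
  rw [uIcc_of_le hw] at hx
  simp only [sqrt_sq hx.1]
  ring

lemma integral_add_mul_sqrt_sub {A b : ℝ} (hA : 0 ≤ A) :
    ∫ t in (0:ℝ)..A, (t + b / 2) * √(A - t) = (4 / 15 * A ^ 2 + b / 3 * A) * √A := by
  have hpow : ∀ s, 0 ≤ s →
      (A + b / 2 - s) * √s = (A + b / 2) * s ^ (1 / 2 : ℝ) - s ^ (3 / 2 : ℝ) := by
    intro s hs
    rw [sqrt_eq_rpow, show (3 / 2 : ℝ) = 1 + 1 / 2 by norm_num, rpow_add' hs (by norm_num),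
      rpow_one]
    ring
  calc ∫ t in (0:ℝ)..A, (t + b / 2) * √(A - t)
      = ∫ s in (0:ℝ)..A, (A + b / 2 - s) * √s := by
        simpa [add_comm] using
          integral_comp_sub_left (fun s => (A + b / 2 - s) * √s) A (a := 0) (b := A)
    _ = ∫ s in (0:ℝ)..A, ((A + b / 2) * s ^ (1 / 2 : ℝ) - s ^ (3 / 2 : ℝ)) := by
        refine integral_congr fun s hs => hpow s ?_
        rw [uIcc_of_le hA] at hs; exact hs.1
    _ = _ := by
        rw [integral_sub ((intervalIntegrable_rpow (by norm_num)).const_mul _)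
          (intervalIntegrable_rpow (by norm_num)), integral_const_mul,
          integral_rpow (by norm_num), integral_rpow (by norm_num)]
        have h32 : A ^ ((1 / 2 : ℝ) + 1) = A * √A := by
          rw [add_comm, rpow_add' hA (by norm_num), rpow_one, sqrt_eq_rpow]
        have h52 : A ^ ((3 / 2 : ℝ) + 1) = A ^ 2 * √A := by
          rw [show (3 / 2 : ℝ) + 1 = 2 + 1 / 2 by norm_num, rpow_add' hA (by norm_num),
            rpow_two, sqrt_eq_rpow]
        rw [h32, h52, zero_rpow (by norm_num), zero_rpow (by norm_num)]
        ring

lemma intervalIntegrable_inv_two_mul_add {A c : ℝ} (hA : 0 ≤ A) (hc : 0 < c) :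
    IntervalIntegrable (fun t => (2 * t + c)⁻¹) MeasureTheory.volume 0 A := by
  refine intervalIntegrable_inv (fun t ht => ?_) (by fun_prop)
  rw [uIcc_of_le hA] at ht
  linarith [ht.1]

section SqrtMulAdd

variable {t b : ℝ}

lemma le_sqrt_mul_add (ht : 0 ≤ t) (hb : 0 ≤ b) : t ≤ √(t * (t + b)) :=
  le_sqrt_of_sq_le (by nlinarith)

lemma sqrt_mul_add_le (ht : 0 ≤ t) (hb : 0 ≤ b) : √(t * (t + b)) ≤ t + b / 2 :=
  sqrt_le_iff.mpr ⟨by linarith, by nlinarith⟩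

lemma add_half_sub_sqrt_mul_add (ht : 0 ≤ t) (hb : 0 < b) :
    t + b / 2 - √(t * (t + b)) = b ^ 2 / 4 / (√(t * (t + b)) + t + b / 2) := by
  have hs := sq_sqrt (by positivity : 0 ≤ t * (t + b))
  have hpos : 0 < √(t * (t + b)) + t + b / 2 := by positivity
  rw [eq_div_iff hpos.ne']
  linear_combination -hs

lemma add_half_sub_le_sqrt_mul_add (ht : 0 ≤ t) (hb : 0 < b) :
    t + b / 2 - b ^ 2 / 4 / (2 * t + b / 2) ≤ √(t * (t + b)) := by
  have h := add_half_sub_sqrt_mul_add ht hb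
  have : b ^ 2 / 4 / (√(t * (t + b)) + t + b / 2) ≤ b ^ 2 / 4 / (2 * t + b / 2) :=
    div_le_div_of_nonneg_left (by positivity) (by positivity)
      (by linarith [le_sqrt_mul_add ht hb.le])
  linarith

lemma sqrt_mul_add_le_add_half_sub (ht : 0 ≤ t) (hb : 0 < b) :
    √(t * (t + b)) ≤ t + b / 2 - b ^ 2 / 4 / (2 * t + b) := by
  have h := add_half_sub_sqrt_mul_add ht hb
  have : b ^ 2 / 4 / (2 * t + b) ≤ b ^ 2 / 4 / (√(t * (t + b)) + t + b / 2) :=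
    div_le_div_of_nonneg_left (by positivity) (by positivity)
      (by linarith [sqrt_mul_add_le ht hb.le])
  linarith

end SqrtMulAdd

lemma sqrt_mul_inv_sub_le_sqrt_sub_mul_inv {A t c : ℝ} (hA : 0 < A) (ht : t ∈ Icc 0 A)
    (hc : 0 < c) :
    √A * (2 * t + c)⁻¹ - (2 * √A)⁻¹ ≤ √(A - t) * (2 * t + c)⁻¹ := by
  obtain ⟨ht0, htA⟩ := ht
  have hsA : 0 < √A := sqrt_pos.mpr hA
  have hden : 0 < 2 * t + c := by linarith
  have hchord : (A - t) / √A ≤ √(A - t) := by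
    rw [div_le_iff₀ hsA]
    calc A - t = √(A - t) * √(A - t) := (mul_self_sqrt (by linarith)).symm
      _ ≤ √(A - t) * √A := by gcongr; linarith
  calc √A * (2 * t + c)⁻¹ - (2 * √A)⁻¹
      ≤ (A - t) / √A * (2 * t + c)⁻¹ := by
        rw [← sub_nonneg]
        field_simp
        rw [sq_sqrt hA.le]
        linarith
    _ ≤ √(A - t) * (2 * t + c)⁻¹ := by gcongr

section OvalIntegral

variable {A b : ℝ}

lemma le_integral_sqrt_sub_mul_sqrt_mul_add (hA : 0 < A) (hb : 0 < b) :
    (4 / 15 * A ^ 2 + b / 3 * A) * √A - b ^ 2 / 4 * √A * (log ((2 * A + b / 2) / (b / 2)) / 2)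
      ≤ ∫ t in (0:ℝ)..A, √(A - t) * √(t * (t + b)) := by
  have hbound : ∀ t ∈ Icc 0 A, (t + b / 2) * √(A - t) - b ^ 2 / 4 * √A * (2 * t + b / 2)⁻¹
      ≤ √(A - t) * √(t * (t + b)) := by
    rintro t ⟨ht0, htA⟩
    calc (t + b / 2) * √(A - t) - b ^ 2 / 4 * √A * (2 * t + b / 2)⁻¹
        ≤ (t + b / 2) * √(A - t) - b ^ 2 / 4 * √(A - t) * (2 * t + b / 2)⁻¹ := by
          gcongr; linarith
      _ = √(A - t) * (t + b / 2 - b ^ 2 / 4 / (2 * t + b / 2)) := by ring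
      _ ≤ √(A - t) * √(t * (t + b)) := by gcongr; exact add_half_sub_le_sqrt_mul_add ht0 hb
  have hinv := intervalIntegrable_inv_two_mul_add hA.le (half_pos hb)
  calc _ = ∫ t in (0:ℝ)..A, ((t + b / 2) * √(A - t) - b ^ 2 / 4 * √A * (2 * t + b / 2)⁻¹) := by
        rw [integral_sub (by apply Continuous.intervalIntegrable; fun_prop) (hinv.const_mul _),
          integral_const_mul, integral_add_mul_sqrt_sub hA.le,
          integral_inv_two_mul_add hA.le (half_pos hb)]
    _ ≤ _ := integral_mono_on hA.le
        (((Continuous.intervalIntegrable (by fun_prop) _ _)).sub (hinv.const_mul _))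
        (Continuous.intervalIntegrable (by fun_prop) _ _) hbound

lemma integral_sqrt_sub_mul_sqrt_mul_add_le (hA : 0 < A) (hb : 0 < b) :
    ∫ t in (0:ℝ)..A, √(A - t) * √(t * (t + b))
      ≤ (4 / 15 * A ^ 2 + b / 3 * A) * √A
        - b ^ 2 / 4 * √A * (log ((2 * A + b) / b) / 2 - 1 / 2) := by
  have hbound : ∀ t ∈ Icc 0 A, √(A - t) * √(t * (t + b))
      ≤ (t + b / 2) * √(A - t) - b ^ 2 / 4 * (√A * (2 * t + b)⁻¹ - (2 * √A)⁻¹) := by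
    intro t ht
    calc √(A - t) * √(t * (t + b))
        ≤ √(A - t) * (t + b / 2 - b ^ 2 / 4 / (2 * t + b)) := by
          gcongr; exact sqrt_mul_add_le_add_half_sub ht.1 hb
      _ = (t + b / 2) * √(A - t) - b ^ 2 / 4 * (√(A - t) * (2 * t + b)⁻¹) := by ring
      _ ≤ _ := by gcongr; exact sqrt_mul_inv_sub_le_sqrt_sub_mul_inv hA ht hb
  have hinv := intervalIntegrable_inv_two_mul_add hA.le hb
  have hsA : √A ≠ 0 := (sqrt_pos.mpr hA).ne'
  calc _ ≤ ∫ t in (0:ℝ)..A,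
        ((t + b / 2) * √(A - t) - b ^ 2 / 4 * (√A * (2 * t + b)⁻¹ - (2 * √A)⁻¹)) :=
        integral_mono_on hA.le (Continuous.intervalIntegrable (by fun_prop) _ _)
          ((Continuous.intervalIntegrable (by fun_prop) _ _).sub
            (((hinv.const_mul _).sub intervalIntegrable_const).const_mul _)) hbound
    _ = _ := by
        rw [integral_sub (by apply Continuous.intervalIntegrable; fun_prop)
          (((hinv.const_mul _).sub intervalIntegrable_const).const_mul _),
          integral_const_mul, integral_sub (hinv.const_mul _) intervalIntegrable_const,
          integral_const_mul, integral_add_mul_sqrt_sub hA.le,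
          integral_inv_two_mul_add hA.le hb, integral_const, smul_eq_mul, sub_zero]
        field_simp
        rw [sq_sqrt hA.le]
        ring

end OvalIntegral

lemma tendsto_neg_log_nhdsGT_zero : Tendsto (fun h => -log h) (𝓝[>] 0) atTop :=
  tendsto_neg_atBot_atTop.comp tendsto_log_nhdsGT_zero

lemma tendsto_inv_neg_log_nhdsGT_zero : Tendsto (fun h => (-log h)⁻¹) (𝓝[>] 0) (𝓝 0) :=
  tendsto_neg_log_nhdsGT_zero.inv_tendsto_atTop

lemma eventually_neg_log_pos : ∀ᶠ h in 𝓝[>] (0 : ℝ), 0 < -log h :=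
  tendsto_neg_log_nhdsGT_zero.eventually_gt_atTop 0

lemma tendsto_log_div_neg_log {g : ℝ → ℝ} {a : ℝ} (ha : a ≠ 0)
    (hg : Tendsto (fun h => h * g h) (𝓝[>] 0) (𝓝 a)) :
    Tendsto (fun h => log (g h) / -log h) (𝓝[>] 0) (𝓝 1) := by
  have hlim : Tendsto (fun h => log (h * g h) * (-log h)⁻¹ + 1) (𝓝[>] 0) (𝓝 1) := by
    simpa using ((continuousAt_log ha).tendsto.comp hg).mul tendsto_inv_neg_log_nhdsGT_zero
      |>.add_const 1
  refine hlim.congr' ?_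
  filter_upwards [self_mem_nhdsWithin, eventually_neg_log_pos, hg.eventually_ne ha]
    with h hh hlog hne
  have hlog' : log h ≠ 0 := (neg_pos.mp hlog).ne
  rw [log_mul hh.ne' (right_ne_zero_of_mul hne)]
  field_simp
  ring

lemma tendsto_log_two_mul_add_div_div_neg_log {A c : ℝ → ℝ} {a k : ℝ} (ha : a ≠ 0) (hk : k ≠ 0)
    (hA : Tendsto A (𝓝[>] 0) (𝓝 a)) (hc : Tendsto (fun h => c h / h) (𝓝[>] 0) (𝓝 k)) :
    Tendsto (fun h => log ((2 * A h + c h) / c h) / -log h) (𝓝[>] 0) (𝓝 1) := by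
  have hc0 : Tendsto c (𝓝[>] 0) (𝓝 0) := by
    have := hc.mul (tendsto_id.mono_left nhdsWithin_le_nhds : Tendsto (fun h : ℝ => h) _ (𝓝 0))
    rw [mul_zero] at this
    refine this.congr' ?_
    filter_upwards [self_mem_nhdsWithin] with h hh
    exact div_mul_cancel₀ _ (ne_of_gt hh)
  refine tendsto_log_div_neg_log (a := 2 * a / k) (by positivity) ?_
  have := ((hA.const_mul 2).add hc0).div hc hk
  rw [add_zero] at this
  refine this.congr' ?_
  filter_upwards with h
  change (2 * A h + c h) / (c h / h) = _
  rw [div_div_eq_mul_div]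
  ring

/-- `2h + t - t²/2 = (xmax h ^ 2 - t) (t + rootB h) / 2`. -/
noncomputable def rootB (h : ℝ) : ℝ := xmax h ^ 2 - 2

/-- `∫₀^A (t + B/2) √(A - t) dt / √2` for `A = xmax h ^ 2`, `B = rootB h`. -/
noncomputable def mainPart (h : ℝ) : ℝ := xmax h ^ 3 * (9 * xmax h ^ 2 - 10) / (15 * √2)

/-- `B² √A / (4 √2 h²)` for `A = xmax h ^ 2`, `B = rootB h`, simplified using `A B = 4h`. -/
noncomputable def remainderCoeff (h : ℝ) : ℝ := 4 / (√2 * xmax h ^ 3)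

section Oval

variable {h : ℝ}

lemma xmax_pos (h : ℝ) : 0 < xmax h := sqrt_pos.mpr (by positivity)

lemma xmax_sq (h : ℝ) : xmax h ^ 2 = 1 + √(1 + 4 * h) := sq_sqrt (by positivity)

lemma continuous_xmax : Continuous xmax := by unfold xmax; fun_prop

lemma xmax_zero : xmax 0 = √2 := by norm_num [xmax]

lemma xmax_sq_mul_rootB (hh : -(1 / 4) ≤ h) : xmax h ^ 2 * rootB h = 4 * h := by
  have hs := sq_sqrt (by linarith : 0 ≤ 1 + 4 * h)
  rw [rootB, xmax_sq]
  linear_combination hs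

lemma rootB_pos (hh : 0 < h) : 0 < rootB h := by
  have : 1 < √(1 + 4 * h) := by rw [lt_sqrt zero_le_one]; linarith
  rw [rootB, xmax_sq]
  linarith

lemma sqrt_two_mul_ellI_two (hh : -(1 / 4) ≤ h) :
    √2 * ellI 2 h = ∫ t in (0:ℝ)..xmax h ^ 2, √(xmax h ^ 2 - t) * √(t * (t + rootB h)) := by
  have hfactor : ∀ t, 2 * (2 * h + t - t ^ 2 / 2) = (xmax h ^ 2 - t) * (t + rootB h) := by
    intro t
    have e := xmax_sq_mul_rootB hh
    rw [rootB] at e ⊢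
    linear_combination -e
  calc √2 * ellI 2 h
      = ∫ x in -xmax h..xmax h, x ^ 2 * √((xmax h ^ 2 - x ^ 2) * (x ^ 2 + rootB h)) := by
        rw [ellI, ← integral_const_mul]
        refine integral_congr fun x _ => ?_
        rw [← hfactor, sqrt_mul zero_le_two]
        ring_nf
    _ = ∫ t in (0:ℝ)..xmax h ^ 2, √t * √((xmax h ^ 2 - t) * (t + rootB h)) :=
        integral_sq_mul_comp_sq (g := fun t => √((xmax h ^ 2 - t) * (t + rootB h)))
          (by fun_prop) (xmax_pos h).le
    _ = _ := by
        refine integral_congr fun t ht => ?_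
        rw [uIcc_of_le (sq_nonneg _)] at ht
        rw [sqrt_mul (sub_nonneg.mpr ht.2), sqrt_mul ht.1]
        ring

lemma mainPart_sub_ellI_two_div_sq_mem (hh : 0 < h) :
    (mainPart h - ellI 2 h) / h ^ 2 ∈ Icc
      (remainderCoeff h * (log ((2 * xmax h ^ 2 + rootB h) / rootB h) / 2 - 1 / 2))
      (remainderCoeff h * (log ((2 * xmax h ^ 2 + rootB h / 2) / (rootB h / 2)) / 2)) := by
  have hw := xmax_pos h
  have hlow := le_integral_sqrt_sub_mul_sqrt_mul_add (pow_pos hw 2) (rootB_pos hh)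
  have hupp := integral_sqrt_sub_mul_sqrt_mul_add_le (pow_pos hw 2) (rootB_pos hh)
  have hP : (4 / 15 * (xmax h ^ 2) ^ 2 + rootB h / 3 * xmax h ^ 2) * xmax h = √2 * mainPart h := by
    rw [mainPart, rootB]
    field_simp
    ring
  have hcoeff : rootB h ^ 2 / 4 * xmax h = √2 * remainderCoeff h * h ^ 2 := by
    rw [remainderCoeff, show h ^ 2 = (xmax h ^ 2 * rootB h / 4) ^ 2 by
      rw [xmax_sq_mul_rootB (by linarith : -(1 / 4) ≤ h)]; ring]
    field_simp
  rw [← sqrt_two_mul_ellI_two (by linarith), sqrt_sq hw.le, hP, hcoeff] at hlow hupp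
  have hs : 0 < √2 := by positivity
  constructor
  · rw [le_div_iff₀ (by positivity)]
    refine le_of_mul_le_mul_left ?_ hs
    linarith
  · rw [div_le_iff₀ (by positivity)]
    refine le_of_mul_le_mul_left ?_ hs
    linarith

lemma mainPart_sub_eq (hh : 0 < h) :
    mainPart h - 16 / 15 - 4 * h = h ^ 3 *
      (64 * (9 * xmax h ^ 2 + 12 * √2 * xmax h + 8) /
        (15 * √2 * (xmax h ^ 2 * (xmax h + √2)) ^ 3)) := by
  have hw := xmax_pos h
  have hs : √2 ^ 2 = 2 := sq_sqrt zero_le_two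
  have h4 := xmax_sq_mul_rootB (by linarith : -(1 / 4) ≤ h)
  rw [rootB] at h4
  have hcube : 15 * √2 * (mainPart h - 16 / 15 - 4 * h) =
      (xmax h - √2) ^ 3 * (9 * xmax h ^ 2 + 12 * √2 * xmax h + 8) := by
    rw [mainPart, ← h4]
    field_simp
    linear_combination (9 * xmax h ^ 3 - 27 * √2 * xmax h ^ 2 + 12 * xmax h * √2 ^ 2 + 8 * √2) * hs
  have hdiff : xmax h - √2 = 4 * h / (xmax h ^ 2 * (xmax h + √2)) := by
    rw [eq_div_iff (by positivity), ← h4]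
    linear_combination -xmax h ^ 2 * hs
  rw [hdiff] at hcube
  calc mainPart h - 16 / 15 - 4 * h = 15 * √2 * (mainPart h - 16 / 15 - 4 * h) / (15 * √2) := by
        field_simp
    _ = _ := by
        rw [hcube]
        field_simp
        norm_num

end Oval

lemma tendsto_xmax : Tendsto xmax (𝓝[>] 0) (𝓝 √2) :=
  xmax_zero ▸ continuous_xmax.continuousAt.tendsto.mono_left nhdsWithin_le_nhds

lemma tendsto_mainPart_sub_div :
    Tendsto (fun h => (mainPart h - 16 / 15 - 4 * h) / (h ^ 2 * log h)) (𝓝[>] 0) (𝓝 0) := by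
  set q : ℝ → ℝ := fun w => 64 * (9 * w ^ 2 + 12 * √2 * w + 8) / (15 * √2 * (w ^ 2 * (w + √2)) ^ 3)
  have hq : ContinuousAt q √2 := by fun_prop (disch := positivity)
  have hid : Tendsto (fun h : ℝ => h) (𝓝[>] 0) (𝓝 0) := tendsto_id.mono_left nhdsWithin_le_nhds
  have hlim := (hq.tendsto.comp tendsto_xmax).mul
    (hid.mul tendsto_log_nhdsGT_zero.inv_tendsto_atBot)
  rw [mul_zero, mul_zero] at hlim
  refine hlim.congr' ?_
  filter_upwards [self_mem_nhdsWithin, eventually_neg_log_pos] with h hh hlog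
  have : log h ≠ 0 := (neg_pos.mp hlog).ne
  rw [mainPart_sub_eq hh]
  simp only [Function.comp_apply, Pi.inv_apply, q]
  field_simp

lemma tendsto_rootB_div : Tendsto (fun h => rootB h / h) (𝓝[>] 0) (𝓝 2) := by
  have hlim : Tendsto (fun h => 4 / xmax h ^ 2) (𝓝[>] 0) (𝓝 2) := by
    have := (tendsto_const_nhds (x := (4:ℝ))).div (tendsto_xmax.pow 2) (by positivity)
    norm_num at this
    exact this
  refine hlim.congr' ?_
  filter_upwards [self_mem_nhdsWithin] with h (hh : 0 < h)
  have := xmax_pos h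
  rw [div_eq_div_iff (by positivity) hh.ne']
  linear_combination -xmax_sq_mul_rootB (h := h) (by linarith)

lemma tendsto_remainderCoeff : Tendsto remainderCoeff (𝓝[>] 0) (𝓝 1) := by
  have hlim := (tendsto_const_nhds (x := (4:ℝ))).div ((tendsto_xmax.pow 3).const_mul √2)
    (by positivity)
  have h4 : √2 * √2 ^ 3 = 4 := by
    rw [show √2 * √2 ^ 3 = (√2 ^ 2) ^ 2 by ring, sq_sqrt zero_le_two]
    norm_num
  rw [h4, div_self four_ne_zero] at hlim
  exact hlim

lemma tendsto_ellI_two_sub_mainPart_div :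
    Tendsto (fun h => (ellI 2 h - mainPart h) / (h ^ 2 * log h)) (𝓝[>] 0) (𝓝 (1 / 2)) := by
  have hA : Tendsto (fun h => xmax h ^ 2) (𝓝[>] 0) (𝓝 2) := by
    simpa using tendsto_xmax.pow 2
  have hL := tendsto_log_two_mul_add_div_div_neg_log two_ne_zero two_ne_zero hA tendsto_rootB_div
  have hL' := tendsto_log_two_mul_add_div_div_neg_log (c := fun h => rootB h / 2)
    two_ne_zero one_ne_zero hA
    (by simpa [div_right_comm] using tendsto_rootB_div.div_const 2)
  have hlow := tendsto_remainderCoeff.mul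
    ((hL.div_const 2).sub (tendsto_inv_neg_log_nhdsGT_zero.const_mul (1 / 2)))
  have hupp := tendsto_remainderCoeff.mul (hL'.div_const 2)
  rw [show (1 : ℝ) * (1 / 2 - 1 / 2 * 0) = 1 / 2 by norm_num] at hlow
  rw [one_mul] at hupp
  have hrem : ∀ h, (ellI 2 h - mainPart h) / (h ^ 2 * log h)
      = (mainPart h - ellI 2 h) / h ^ 2 / -log h := fun h => by
    rw [div_div, mul_neg, div_neg, ← neg_div, neg_sub]
  refine tendsto_of_tendsto_of_tendsto_of_le_of_le' hlow hupp ?_ ?_ <;>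
    filter_upwards [self_mem_nhdsWithin, eventually_neg_log_pos] with h (hh : 0 < h) hlog <;>
    rw [hrem]
  · calc _ = remainderCoeff h * (log ((2 * xmax h ^ 2 + rootB h) / rootB h) / 2 - 1 / 2)
          / -log h := by ring
      _ ≤ _ := by gcongr; exact (mainPart_sub_ellI_two_div_sq_mem hh).1
  · calc _ ≤ remainderCoeff h * (log ((2 * xmax h ^ 2 + rootB h / 2) / (rootB h / 2)) / 2)
          / -log h := by gcongr; exact (mainPart_sub_ellI_two_div_sq_mem hh).2
      _ = _ := by ring

/-- Leading logarithmic term of `I₂` at the figure-eight. -/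
theorem ellI2_log_asymptotics :
    Tendsto (fun h => (ellI 2 h - 16/15 - 4*h) / (h^2 * Real.log h))
      (nhdsWithin 0 (Ioi 0)) (nhds (1/2)) := by
  have hlim := tendsto_mainPart_sub_div.add tendsto_ellI_two_sub_mainPart_div
  rw [zero_add] at hlim
  refine hlim.congr fun h => ?_
  rw [← add_div]
  ring
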